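/- Let (m_n) be a sequence of positive integers and (μ_n) a sequence in (0,∞) such that m_n → ∞, μ_n → 0 and m_n^γ·μ_n → C as n → ∞ for some constant C ∈ (0, b/(1−γ)). Then the truncated density function admits the first-order expansion R_{m_n}(e^{μ_n}) = ρ_c + σ_c²·μ_n + o(μ_n), i.e. (R_{m_n}(e^{μ_n}) − ρ_c − σ_c²·μ_n)/μ_n → 0 as n → ∞. -/

import Mathlib

open Filter Topology

/-- Zero-range jump rates: `g 0 = 0`, `g n = 1 + b / n ^ γ` for `n ≥ 1`. -/
noncomputable def zrpG (b γ : ℝ) (n : ℕ) : ℝ := if n = 0 then 0 else 1 + b / (n : ℝ) ^ γ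

/-- Stationary weights: `w 0 = 1`, `w n = ∏_{k=1}^n 1 / g k`. -/
noncomputable def zrpW (b γ : ℝ) (n : ℕ) : ℝ := ∏ k ∈ Finset.Icc 1 n, (zrpG b γ k)⁻¹

/-- Single-site partition function `z φ = Σ_{k≥0} w k · φ^k`. -/
noncomputable def zrpZfun (b γ φ : ℝ) : ℝ := ∑' k : ℕ, zrpW b γ k * φ ^ k

/-- Critical density `ρ_c = (Σ k·w k) / z 1`. -/
noncomputable def zrpRhoC (b γ : ℝ) : ℝ :=
  (∑' k : ℕ, (k : ℝ) * zrpW b γ k) / (∑' k : ℕ, zrpW b γ k)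

/-- Critical variance `σ_c² = (Σ k²·w k) / z 1 − ρ_c²`. -/
noncomputable def zrpSigmaSq (b γ : ℝ) : ℝ :=
  (∑' k : ℕ, (k : ℝ) ^ 2 * zrpW b γ k) / (∑' k : ℕ, zrpW b γ k) - (zrpRhoC b γ) ^ 2

/-- Truncated partition function `z_m(φ) = Σ_{k=0}^m w k · φ^k`. -/
noncomputable def zrpZtrunc (b γ : ℝ) (m : ℕ) (φ : ℝ) : ℝ :=
  ∑ k ∈ Finset.range (m + 1), zrpW b γ k * φ ^ k

/-- Truncated density function `R_m(φ) = (Σ_{k=0}^m k·w k·φ^k) / z_m(φ)`. -/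
noncomputable def zrpRtrunc (b γ : ℝ) (m : ℕ) (φ : ℝ) : ℝ :=
  (∑ k ∈ Finset.range (m + 1), (k : ℝ) * zrpW b γ k * φ ^ k) / zrpZtrunc b γ m φ

/-- Canonical partition function `Z(L,N) = Σ_{η : Fin L → ℕ, Σ η = N} ∏ w (η x)`. -/
noncomputable def zrpZc (b γ : ℝ) (L N : ℕ) : ℝ :=
  ∑ η ∈ (Fintype.piFinset fun _ : Fin L => Finset.range (N + 1)).filter
      (fun η => ∑ x, η x = N),
    ∏ x, zrpW b γ (η x)

/-- Cut-off canonical partition function, restricting to `η x ≤ m` for all `x`. -/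
noncomputable def zrpQc (b γ : ℝ) (L N m : ℕ) : ℝ :=
  ∑ η ∈ (Fintype.piFinset fun _ : Fin L => Finset.range (N + 1)).filter
      (fun η => ∑ x, η x = N ∧ ∀ x, η x ≤ m),
    ∏ x, zrpW b γ (η x)

/-- Finite-size rate function `I_{L,N}(m)`. -/
noncomputable def zrpI (b γ : ℝ) (L N m : ℕ) : ℝ :=
  -(1 / (L : ℝ)) * Real.log ((zrpQc b γ L N m - zrpQc b γ L N (m - 1)) / zrpZc b γ L N)

/-!
Write `S_q = ∑ k^q w(k)` and `A_q = ∑_{k ≤ m} k^q w(k) e^{kμ}`, so that `R_m(e^μ) = A_1 / A_0`,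
`ρ_c = S_1 / S_0` and `σ_c² = S_2 / S_0 - (S_1 / S_0)²`. By the quotient rule for first-order
expansions it suffices to show `A_q = S_q + S_{q+1} μ + o(μ)` for every `q`.

Since `log g(k) ~ b k^{-γ}` while `δ k^{1-γ}` has increments `~ δ (1-γ) k^{-γ}`, the weights obey
`w(k) ≤ M exp(-δ k^{1-γ})` for every `δ < b/(1-γ)`; fix such a `δ > C`. Below the cut-off,
`kμ ≤ (m^γ μ) k^{1-γ} < δ k^{1-γ}`, so the remainders `k^q w(k) (e^{kμ} - 1 - kμ) / μ` are
`O(μ k^{q+2} e^{-ε k^{1-γ}})` for some `ε > 0`; above it, `kμ ≥ m^γ μ > C/2`, so each missing term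
`k^q w(k) (1 + kμ) / μ` is at most `(2/C + 1) k^{q+1} w(k)`. Dominated convergence for series
concludes.
-/

open Real

lemma Real.exp_sub_one_sub_le_sq_mul_exp {x : ℝ} (hx : 0 ≤ x) :
    exp x - 1 - x ≤ x ^ 2 * exp x := by
  have h : exp x - 1 ≤ x * exp x := by
    have h1 := add_one_le_exp (-x)
    have h2 : exp (-x) * exp x = 1 := by rw [← exp_add]; simp
    nlinarith [exp_pos x]
  nlinarith [mul_le_mul_of_nonneg_left h hx]

lemma Real.add_one_rpow_sub_rpow_le {x p : ℝ} (hx : 0 < x) (hp0 : 0 ≤ p) (hp1 : p ≤ 1) :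
    (x + 1) ^ p - x ^ p ≤ p * x ^ (p - 1) := by
  have hbern : (1 + x⁻¹) ^ p ≤ 1 + p * x⁻¹ :=
    rpow_one_add_le_one_add_mul_self (by linarith [inv_pos.2 hx]) hp0 hp1
  have hsplit : (x + 1) ^ p = x ^ p * (1 + x⁻¹) ^ p := by
    rw [← mul_rpow hx.le (by positivity)]; congr 1; field_simp
  rw [hsplit, rpow_sub_one hx.ne']
  have := mul_le_mul_of_nonneg_left hbern (rpow_nonneg hx.le p)
  calc _ ≤ x ^ p * (1 + p * x⁻¹) - x ^ p := by linarith
    _ = _ := by ring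

lemma Real.le_rpow_mul_rpow_one_sub {x y γ : ℝ} (hx : 0 ≤ x) (hxy : x ≤ y) (hγ : 0 ≤ γ) :
    x ≤ y ^ γ * x ^ (1 - γ) := by
  rcases hx.eq_or_lt with rfl | hx
  · exact mul_nonneg (rpow_nonneg hxy _) (rpow_nonneg le_rfl _)
  calc x = x ^ γ * x ^ (1 - γ) := by rw [← rpow_add hx]; simp
    _ ≤ y ^ γ * x ^ (1 - γ) := by gcongr

lemma summable_pow_mul_exp_neg_mul_rpow (q : ℕ) {ε p : ℝ} (hε : 0 < ε) (hp : 0 < p) :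
    Summable fun k : ℕ => (k : ℝ) ^ q * exp (-(ε * (k : ℝ) ^ p)) := by
  have hlim : Tendsto (fun k : ℕ => (k : ℝ) ^ (q + 2) * exp (-(ε * (k : ℝ) ^ p)))
      atTop (𝓝 0) := by
    refine ((tendsto_rpow_mul_exp_neg_mul_atTop_nhds_zero ((q + 2) / p) ε hε).comp
      ((tendsto_rpow_atTop hp).comp tendsto_natCast_atTop_atTop)).congr fun k => ?_
    rw [Function.comp_apply, Function.comp_apply, ← rpow_mul (Nat.cast_nonneg k),
      mul_div_cancel₀ _ hp.ne', neg_mul]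
    norm_cast
  have hsq := Asymptotics.isBigO_refl (fun k : ℕ => ((k : ℝ) ^ 2)⁻¹) atTop
  refine summable_of_isBigO_nat (summable_nat_pow_inv.2 one_lt_two)
    (((hlim.isBigO_one ℝ).mul hsq).congr' ?_ (by simp))
  filter_upwards [eventually_ne_atTop 0] with k hk
  field_simp
  ring

lemma summable_pow_mul_of_abs_le_mul_exp {w : ℕ → ℝ} (q : ℕ) {δ M p : ℝ} (hδ : 0 < δ) (hp : 0 < p)
    (hw : ∀ k, |w k| ≤ M * exp (-(δ * (k : ℝ) ^ p))) :
    Summable fun k : ℕ => (k : ℝ) ^ q * w k :=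
  ((summable_pow_mul_exp_neg_mul_rpow q hδ hp).mul_left M).of_norm_bounded fun k => by
    rw [norm_mul, norm_pow, Real.norm_natCast, Real.norm_eq_abs, mul_left_comm]
    gcongr
    exact hw k

lemma exists_le_mul_exp_neg_of_eventually_le {v u : ℕ → ℝ}
    (h : ∀ᶠ n in atTop, v (n + 1) ≤ v n * exp (u n - u (n + 1))) :
    ∃ M, ∀ n, v n ≤ M * exp (-u n) := by
  obtain ⟨N, hN⟩ := eventually_atTop.1 h
  have hanti : ∀ n ≥ N, v n * exp (u n) ≤ v N * exp (u N) := by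
    intro n hn
    induction n, hn using Nat.le_induction with
    | base => rfl
    | succ n hn ih =>
      calc v (n + 1) * exp (u (n + 1)) ≤ v n * exp (u n - u (n + 1)) * exp (u (n + 1)) := by
            gcongr; exact hN n hn
        _ = v n * exp (u n) := by rw [mul_assoc, ← exp_add, sub_add_cancel]
        _ ≤ v N * exp (u N) := ih
  obtain ⟨M, hM⟩ := (isBoundedUnder_of_eventually_le (eventually_atTop.2 ⟨N, hanti⟩)).bddAbove_range
  refine ⟨M, fun n => ?_⟩
  calc v n = v n * exp (u n) * exp (-u n) := by
        rw [mul_assoc, ← exp_add, add_neg_cancel, exp_zero, mul_one]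
    _ ≤ M * exp (-u n) := by gcongr; exact hM ⟨n, rfl⟩

theorem tendsto_div_expansion {ι : Type*} {l : Filter ι} {μ f g : ι → ℝ} {a a' c c' : ℝ}
    (hμ : Tendsto μ l (𝓝 0)) (hμ0 : ∀ᶠ n in l, μ n ≠ 0) (hc : c ≠ 0)
    (hf : Tendsto (fun n => (f n - a - a' * μ n) / μ n) l (𝓝 0))
    (hg : Tendsto (fun n => (g n - c - c' * μ n) / μ n) l (𝓝 0)) :
    Tendsto (fun n => (f n / g n - a / c - (a' / c - a / c * (c' / c)) * μ n) / μ n) l (𝓝 0) := by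
  have hg_sub : Tendsto (fun n => g n - c) l (𝓝 0) := by
    have h := (hμ.mul hg).add (hμ.const_mul c')
    rw [zero_mul, mul_zero, add_zero] at h
    refine h.congr' ?_
    filter_upwards [hμ0] with n hn
    field_simp
    ring
  have hg_lim : Tendsto g l (𝓝 c) := by
    simpa using hg_sub.add_const c
  -- With `D = (a'c - ac') / c²`:
  -- `f/g - a/c - Dμ = (c (f - a - a'μ) - a (g - c - c'μ)) / (g c) - c² D (g - c) / (g c²)`.
  have h := (((hf.const_mul c).sub (hg.const_mul a)).div (hg_lim.mul_const c)
    (mul_ne_zero hc hc)).sub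
    ((hg_sub.const_mul (a' * c - a * c')).div (hg_lim.mul_const (c ^ 2)) (by positivity))
  rw [mul_zero, mul_zero, sub_zero, zero_div, mul_zero, zero_div, sub_zero] at h
  refine h.congr' ?_
  filter_upwards [hμ0, hg_lim.eventually_ne hc] with n hμn hgn
  simp only [Pi.div_apply]
  field_simp
  ring

lemma eventually_pos_of_tendsto_rpow_mul {ι : Type*} {l : Filter ι} {m : ι → ℕ} {μ : ι → ℝ}
    {γ C : ℝ} (hC : Tendsto (fun n => (m n : ℝ) ^ γ * μ n) l (𝓝 C)) (hC0 : 0 < C) :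
    ∀ᶠ n in l, 0 < μ n := by
  filter_upwards [hC.eventually (lt_mem_nhds hC0)] with n hn
  exact pos_of_mul_pos_right hn (rpow_nonneg (Nat.cast_nonneg _) _)

noncomputable def momentSum (w : ℕ → ℝ) (q : ℕ) : ℝ := ∑' k : ℕ, (k : ℝ) ^ q * w k

noncomputable def truncMomentSum (w : ℕ → ℝ) (q m : ℕ) (φ : ℝ) : ℝ :=
  ∑ k ∈ Finset.range (m + 1), (k : ℝ) ^ q * w k * φ ^ k

noncomputable def momentRemainderTerm (w : ℕ → ℝ) (q m : ℕ) (μ : ℝ) (k : ℕ) : ℝ :=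
  (k : ℝ) ^ q * w k * ((if k ≤ m then exp (k * μ) else 0) - 1 - k * μ)

section MomentExpansion

variable {w : ℕ → ℝ} {q m : ℕ} {μ : ℝ}

lemma hasSum_momentRemainderTerm (hq : Summable fun k : ℕ => (k : ℝ) ^ q * w k)
    (hq' : Summable fun k : ℕ => (k : ℝ) ^ (q + 1) * w k) :
    HasSum (momentRemainderTerm w q m μ)
      (truncMomentSum w q m (exp μ) - momentSum w q - momentSum w (q + 1) * μ) := by
  have htrunc : HasSum (fun k : ℕ => if k ≤ m then (k : ℝ) ^ q * w k * exp (k * μ) else 0)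
      (truncMomentSum w q m (exp μ)) := by
    have h : HasSum (fun k : ℕ => if k ≤ m then (k : ℝ) ^ q * w k * exp (k * μ) else 0)
        (∑ k ∈ Finset.range (m + 1), if k ≤ m then (k : ℝ) ^ q * w k * exp (k * μ) else 0) :=
      hasSum_sum_of_ne_finset_zero fun k hk => if_neg (by simpa [Nat.lt_succ_iff] using hk)
    convert h using 1
    refine Finset.sum_congr rfl fun k hk => ?_
    rw [if_pos (Nat.lt_succ_iff.1 (Finset.mem_range.1 hk)), exp_nat_mul]
  have hterm : momentRemainderTerm w q m μ = fun k =>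
      (if k ≤ m then (k : ℝ) ^ q * w k * exp (k * μ) else 0) - (k : ℝ) ^ q * w k
        - (k : ℝ) ^ (q + 1) * w k * μ := by
    funext k
    rw [momentRemainderTerm]
    split_ifs <;> ring
  rw [hterm]
  exact (htrunc.sub hq.hasSum).sub (hq'.hasSum.mul_right μ)

lemma abs_momentRemainderTerm_le_of_le {k : ℕ} (hk : k ≤ m) (hμ : 0 ≤ μ) :
    |momentRemainderTerm w q m μ k| ≤ μ ^ 2 * ((k : ℝ) ^ (q + 2) * |w k| * exp (k * μ)) := by
  have hx : 0 ≤ (k : ℝ) * μ := by positivity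
  have hexp : 0 ≤ exp (k * μ) - 1 - k * μ := by linarith [add_one_le_exp ((k : ℝ) * μ)]
  rw [momentRemainderTerm, if_pos hk, abs_mul, abs_mul, abs_pow, Nat.abs_cast,
    abs_of_nonneg hexp]
  calc (k : ℝ) ^ q * |w k| * (exp (k * μ) - 1 - k * μ)
      ≤ (k : ℝ) ^ q * |w k| * ((k * μ) ^ 2 * exp (k * μ)) := by
        gcongr; exact exp_sub_one_sub_le_sq_mul_exp hx
    _ = _ := by ring

lemma abs_momentRemainderTerm_le_of_lt {k : ℕ} (hk : m < k) {c : ℝ} (hc : 0 < c)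
    (hkμ : c ≤ k * μ) :
    |momentRemainderTerm w q m μ k| ≤ μ * ((c⁻¹ + 1) * ((k : ℝ) ^ (q + 1) * |w k|)) := by
  have hx : 0 ≤ (k : ℝ) * μ := hc.le.trans hkμ
  rw [momentRemainderTerm, if_neg hk.not_ge, zero_sub, ← neg_add', abs_mul, abs_mul, abs_pow,
    Nat.abs_cast, abs_neg, abs_of_nonneg (by linarith : (0 : ℝ) ≤ 1 + k * μ)]
  have h1 : 1 ≤ c⁻¹ * (k * μ) := by rw [inv_mul_eq_div]; exact (one_le_div hc).2 hkμ
  calc (k : ℝ) ^ q * |w k| * (1 + k * μ)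
      ≤ (k : ℝ) ^ q * |w k| * (c⁻¹ * (k * μ) + k * μ) := by gcongr
    _ = _ := by ring

lemma abs_momentRemainderTerm_le {γ δ ε M c : ℝ} (hγ0 : 0 ≤ γ) (hγ1 : γ ≤ 1)
    (hw : ∀ k, |w k| ≤ M * exp (-(δ * (k : ℝ) ^ (1 - γ)))) (hμ0 : 0 < μ) (hμ1 : μ ≤ 1)
    (hc : 0 < c) (hlow : c ≤ (m : ℝ) ^ γ * μ) (hup : (m : ℝ) ^ γ * μ ≤ δ - ε) (k : ℕ) :
    |momentRemainderTerm w q m μ k| ≤ μ * (M * ((k : ℝ) ^ (q + 2) * exp (-(ε * (k : ℝ) ^ (1 - γ))))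
      + (c⁻¹ + 1) * ((k : ℝ) ^ (q + 1) * |w k|)) := by
  have hM : 0 ≤ M := (mul_nonneg_iff_of_pos_right (exp_pos _)).1 ((abs_nonneg _).trans (hw 0))
  rcases le_or_gt k m with hk | hk
  · have hkμ : (k : ℝ) * μ ≤ (δ - ε) * (k : ℝ) ^ (1 - γ) :=
      calc (k : ℝ) * μ ≤ (m : ℝ) ^ γ * (k : ℝ) ^ (1 - γ) * μ := by
            gcongr; exact le_rpow_mul_rpow_one_sub k.cast_nonneg (by exact_mod_cast hk) hγ0
        _ = (m : ℝ) ^ γ * μ * (k : ℝ) ^ (1 - γ) := by ring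
        _ ≤ (δ - ε) * (k : ℝ) ^ (1 - γ) := by gcongr
    have hwexp : |w k| * exp (k * μ) ≤ M * exp (-(ε * (k : ℝ) ^ (1 - γ))) :=
      calc |w k| * exp (k * μ)
          ≤ M * exp (-(δ * (k : ℝ) ^ (1 - γ))) * exp ((δ - ε) * (k : ℝ) ^ (1 - γ)) := by
            gcongr; exact hw k
        _ = M * exp (-(ε * (k : ℝ) ^ (1 - γ))) := by rw [mul_assoc, ← exp_add]; ring_nf
    calc _ ≤ μ ^ 2 * ((k : ℝ) ^ (q + 2) * |w k| * exp (k * μ)) :=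
          abs_momentRemainderTerm_le_of_le hk hμ0.le
      _ = μ * (μ * ((k : ℝ) ^ (q + 2) * (|w k| * exp (k * μ)))) := by ring
      _ ≤ μ * (1 * ((k : ℝ) ^ (q + 2) * (M * exp (-(ε * (k : ℝ) ^ (1 - γ)))))) := by gcongr
      _ = μ * (M * ((k : ℝ) ^ (q + 2) * exp (-(ε * (k : ℝ) ^ (1 - γ))))) := by ring
      _ ≤ _ := by gcongr; exact le_add_of_nonneg_right (by positivity)
  · have hmk : (m : ℝ) ^ γ ≤ k :=
      calc (m : ℝ) ^ γ ≤ (k : ℝ) ^ γ := by gcongr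
        _ ≤ k := rpow_le_self_of_one_le (Nat.one_le_cast.2 (Nat.one_le_of_lt hk)) hγ1
    calc _ ≤ μ * ((c⁻¹ + 1) * ((k : ℝ) ^ (q + 1) * |w k|)) :=
          abs_momentRemainderTerm_le_of_lt hk hc (hlow.trans (by gcongr))
      _ ≤ _ := by gcongr; exact le_add_of_nonneg_left (by positivity)

end MomentExpansion

lemma tendsto_momentRemainderTerm_div {w : ℕ → ℝ} {q : ℕ} {m : ℕ → ℕ} {μ : ℕ → ℝ} (k : ℕ)
    (hm : Tendsto m atTop atTop) (hμ : Tendsto μ atTop (𝓝 0)) (hpos : ∀ᶠ n in atTop, 0 < μ n) :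
    Tendsto (fun n => momentRemainderTerm w q (m n) (μ n) k / μ n) atTop (𝓝 0) := by
  have hexp : Tendsto (fun n => exp (k * μ n)) atTop (𝓝 1) := by
    simpa using (hμ.const_mul (k : ℝ)).rexp
  have hbound := hμ.mul (hexp.const_mul ((k : ℝ) ^ (q + 2) * |w k|))
  rw [zero_mul] at hbound
  refine squeeze_zero_norm' ?_ hbound
  filter_upwards [hm.eventually_ge_atTop k, hpos] with n hk hμn
  rw [Real.norm_eq_abs, abs_div, abs_of_pos hμn, div_le_iff₀ hμn]
  calc _ ≤ μ n ^ 2 * ((k : ℝ) ^ (q + 2) * |w k| * exp (k * μ n)) :=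
        abs_momentRemainderTerm_le_of_le hk hμn.le
    _ = _ := by ring

theorem tendsto_truncMomentSum_expansion {w : ℕ → ℝ} {γ δ M C : ℝ} (q : ℕ) (hγ0 : 0 ≤ γ)
    (hγ1 : γ < 1) (hw : ∀ k, |w k| ≤ M * exp (-(δ * (k : ℝ) ^ (1 - γ))))
    {m : ℕ → ℕ} {μ : ℕ → ℝ} (hm : Tendsto m atTop atTop) (hμ : Tendsto μ atTop (𝓝 0))
    (hC : Tendsto (fun n => (m n : ℝ) ^ γ * μ n) atTop (𝓝 C)) (hC0 : 0 < C) (hCδ : C < δ) :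
    Tendsto (fun n => (truncMomentSum w q (m n) (exp (μ n)) - momentSum w q
      - momentSum w (q + 1) * μ n) / μ n) atTop (𝓝 0) := by
  set ε := (δ - C) / 2
  have hε : 0 < ε := by simp only [ε]; linarith
  have hp : 0 < 1 - γ := sub_pos.2 hγ1
  have hsum (j : ℕ) : Summable fun k : ℕ => (k : ℝ) ^ j * w k :=
    summable_pow_mul_of_abs_le_mul_exp j (hC0.trans hCδ) hp hw
  have hpos := eventually_pos_of_tendsto_rpow_mul hC hC0
  have hdom : ∀ᶠ n in atTop, ∀ k, ‖momentRemainderTerm w q (m n) (μ n) k / μ n‖ ≤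
      M * ((k : ℝ) ^ (q + 2) * exp (-(ε * (k : ℝ) ^ (1 - γ))))
        + ((C / 2)⁻¹ + 1) * ((k : ℝ) ^ (q + 1) * |w k|) := by
    filter_upwards [hpos, hμ.eventually (ge_mem_nhds one_pos),
      hC.eventually (lt_mem_nhds (half_lt_self hC0)),
      hC.eventually (gt_mem_nhds (by simp only [ε]; linarith : C < δ - ε))]
      with n hμn hμ1 hlow hup k
    rw [Real.norm_eq_abs, abs_div, abs_of_pos hμn, div_le_iff₀' hμn]
    exact abs_momentRemainderTerm_le hγ0 hγ1.le hw hμn hμ1 (half_pos hC0) hlow.le hup.le k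
  have hbound_sum : Summable fun k : ℕ => M * ((k : ℝ) ^ (q + 2) * exp (-(ε * (k : ℝ) ^ (1 - γ))))
      + ((C / 2)⁻¹ + 1) * ((k : ℝ) ^ (q + 1) * |w k|) :=
    ((summable_pow_mul_exp_neg_mul_rpow _ hε hp).mul_left M).add
      ((summable_pow_mul_of_abs_le_mul_exp _ (hC0.trans hCδ) hp (by simpa using hw)).mul_left _)
  have := tendsto_tsum_of_dominated_convergence hbound_sum
    (fun k => tendsto_momentRemainderTerm_div k hm hμ hpos) hdom
  rw [tsum_zero] at this
  refine this.congr fun n => ?_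
  exact ((hasSum_momentRemainderTerm (hsum q) (hsum (q + 1))).div_const (μ n)).tsum_eq

section ZeroRange

variable {b γ : ℝ}

lemma zrpG_succ (n : ℕ) : zrpG b γ (n + 1) = 1 + b / ((n : ℝ) + 1) ^ γ := by
  rw [zrpG, if_neg n.succ_ne_zero]
  push_cast
  rfl

lemma zrpW_zero : zrpW b γ 0 = 1 := by simp [zrpW]

lemma zrpW_succ (n : ℕ) : zrpW b γ (n + 1) = zrpW b γ n * (zrpG b γ (n + 1))⁻¹ := by
  rw [zrpW, zrpW, Finset.prod_Icc_succ_top (by omega : 1 ≤ n + 1)]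

lemma zrpW_pos (hb : 0 ≤ b) (n : ℕ) : 0 < zrpW b γ n := by
  induction n with
  | zero => simp [zrpW_zero]
  | succ n ih => rw [zrpW_succ, zrpG_succ]; positivity

lemma eventually_mul_rpow_sub_le_log_zrpG (hγ0 : 0 < γ) (hγ1 : γ < 1) (hb : 0 < b) {δ : ℝ}
    (hδ0 : 0 ≤ δ) (hδ : δ * (1 - γ) < b) :
    ∀ᶠ n : ℕ in atTop,
      δ * (((n : ℝ) + 1) ^ (1 - γ) - (n : ℝ) ^ (1 - γ)) ≤ log (zrpG b γ (n + 1)) := by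
  have hratio : Tendsto (fun n : ℕ => δ * (1 - γ) / ((n : ℝ) / (n + 1)) ^ γ) atTop
      (𝓝 (δ * (1 - γ))) := by
    have h := (tendsto_const_nhds (x := δ * (1 - γ)) (f := atTop)).div
      ((tendsto_natCast_div_add_atTop (1 : ℝ)).rpow_const (Or.inr hγ0.le)) (by simp)
    rwa [one_rpow, div_one] at h
  have hsmall : Tendsto (fun n : ℕ => b / ((n : ℝ) + 1) ^ γ) atTop (𝓝 0) :=
    tendsto_const_nhds.div_atTop ((tendsto_rpow_atTop hγ0).comp
      (tendsto_atTop_add_const_right _ 1 tendsto_natCast_atTop_atTop))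
  have hlog : Tendsto (fun n : ℕ => b / (1 + b / ((n : ℝ) + 1) ^ γ)) atTop (𝓝 b) := by
    have h := (tendsto_const_nhds (x := b) (f := atTop)).div
      (tendsto_const_nhds.add hsmall) (by norm_num : (1 : ℝ) + 0 ≠ 0)
    rwa [add_zero, div_one] at h
  filter_upwards [hratio.eventually_lt hlog hδ, eventually_gt_atTop 0] with n hlt hn
  have hn' : (0 : ℝ) < n := Nat.cast_pos.2 hn
  set y := b / ((n : ℝ) + 1) ^ γ with hy
  calc δ * (((n : ℝ) + 1) ^ (1 - γ) - (n : ℝ) ^ (1 - γ))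
      ≤ δ * ((1 - γ) * (n : ℝ) ^ (1 - γ - 1)) := by
        gcongr; exact add_one_rpow_sub_rpow_le hn' (by linarith) (by linarith)
    _ = δ * (1 - γ) / ((n : ℝ) / (n + 1)) ^ γ / ((n : ℝ) + 1) ^ γ := by
        rw [div_rpow hn'.le (by positivity), show 1 - γ - 1 = -γ by ring, rpow_neg hn'.le]
        field_simp
    _ ≤ b / (1 + y) / ((n : ℝ) + 1) ^ γ := by gcongr
    _ = 1 - (1 + y)⁻¹ := by rw [hy]; field_simp; ring
    _ ≤ log (1 + y) := one_sub_inv_le_log_of_pos (by positivity)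
    _ = log (zrpG b γ (n + 1)) := by rw [zrpG_succ]

lemma exists_zrpW_le_mul_exp_neg (hγ0 : 0 < γ) (hγ1 : γ < 1) (hb : 0 < b) {δ : ℝ}
    (hδ0 : 0 ≤ δ) (hδ : δ * (1 - γ) < b) :
    ∃ M, ∀ n : ℕ, zrpW b γ n ≤ M * exp (-(δ * (n : ℝ) ^ (1 - γ))) := by
  refine exists_le_mul_exp_neg_of_eventually_le ?_
  filter_upwards [eventually_mul_rpow_sub_le_log_zrpG hγ0 hγ1 hb hδ0 hδ] with n hn
  have hg : 0 < zrpG b γ (n + 1) := by rw [zrpG_succ]; positivity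
  rw [zrpW_succ, ← exp_log hg, ← exp_neg]
  gcongr
  · exact (zrpW_pos hb.le n).le
  · push_cast; linarith

lemma zrpRtrunc_eq_div (m : ℕ) (φ : ℝ) :
    zrpRtrunc b γ m φ = truncMomentSum (zrpW b γ) 1 m φ / truncMomentSum (zrpW b γ) 0 m φ := by
  simp [zrpRtrunc, zrpZtrunc, truncMomentSum]

lemma zrpRhoC_eq_div : zrpRhoC b γ = momentSum (zrpW b γ) 1 / momentSum (zrpW b γ) 0 := by
  simp [zrpRhoC, momentSum]

lemma zrpSigmaSq_eq : zrpSigmaSq b γ = momentSum (zrpW b γ) 2 / momentSum (zrpW b γ) 0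
    - momentSum (zrpW b γ) 1 / momentSum (zrpW b γ) 0
      * (momentSum (zrpW b γ) 1 / momentSum (zrpW b γ) 0) := by
  rw [zrpSigmaSq, zrpRhoC_eq_div, sq]
  simp [momentSum]

end ZeroRange

theorem truncated_density_expansion_general (b γ : ℝ) (hγ0 : 0 < γ) (hγ1 : γ < 1) (hb : 0 < b)
    (m : ℕ → ℕ) (μ : ℕ → ℝ) (C : ℝ)
    (hm : Tendsto m atTop atTop) (hμ : Tendsto μ atTop (nhds 0))
    (hC : Tendsto (fun n => (m n : ℝ) ^ γ * μ n) atTop (nhds C))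
    (hC0 : 0 < C) (hCb : C < b / (1 - γ)) :
    Tendsto
      (fun n => (zrpRtrunc b γ (m n) (Real.exp (μ n)) - zrpRhoC b γ
        - zrpSigmaSq b γ * μ n) / μ n) atTop (nhds 0) := by
  obtain ⟨δ, hCδ, hδb⟩ := exists_between hCb
  have hδ : δ * (1 - γ) < b := (lt_div_iff₀ (sub_pos.2 hγ1)).1 hδb
  obtain ⟨M, hM⟩ := exists_zrpW_le_mul_exp_neg hγ0 hγ1 hb (hC0.trans hCδ).le hδ
  have hw (k : ℕ) : |zrpW b γ k| ≤ M * exp (-(δ * (k : ℝ) ^ (1 - γ))) :=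
    (abs_of_pos (zrpW_pos hb.le k)).le.trans (hM k)
  have hS0 : 1 ≤ momentSum (zrpW b γ) 0 := by
    have h := (summable_pow_mul_of_abs_le_mul_exp 0 (hC0.trans hCδ) (sub_pos.2 hγ1) hw).le_tsum 0
      fun k _ => by simpa using (zrpW_pos hb.le k).le
    simpa [zrpW_zero, momentSum] using h
  have hmoment (q : ℕ) := tendsto_truncMomentSum_expansion q hγ0.le hγ1 hw hm hμ hC hC0 hCδ
  have hμ0 := (eventually_pos_of_tendsto_rpow_mul hC hC0).mono fun n hn => hn.ne'
  simpa only [zrpRtrunc_eq_div, zrpRhoC_eq_div, zrpSigmaSq_eq, Nat.reduceAdd] using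
    tendsto_div_expansion hμ hμ0 (zero_lt_one.trans_le hS0).ne' (hmoment 1) (hmoment 0)

/-- Under the cut-off scaling `m_n → ∞`, `μ_n → 0⁺`, `m_n^γ·μ_n → C`
with `0 < C < b/(1−γ)`, the truncated density function expands as
`R_{m_n}(e^{μ_n}) = ρ_c + σ_c²·μ_n + o(μ_n)`. -/
theorem truncated_density_expansion (b γ : ℝ) (hγ0 : 0 < γ) (hγ1 : γ < 1) (hb : 0 < b)
    (m : ℕ → ℕ) (μ : ℕ → ℝ) (C : ℝ)
    (hmpos : ∀ n, 0 < m n) (hμpos : ∀ n, 0 < μ n)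
    (hm : Tendsto m atTop atTop) (hμ : Tendsto μ atTop (nhds 0))
    (hC : Tendsto (fun n => (m n : ℝ) ^ γ * μ n) atTop (nhds C))
    (hC0 : 0 < C) (hCb : C < b / (1 - γ)) :
    Tendsto
      (fun n => (zrpRtrunc b γ (m n) (Real.exp (μ n)) - zrpRhoC b γ
        - zrpSigmaSq b γ * μ n) / μ n) atTop (nhds 0) :=
  truncated_density_expansion_general b γ hγ0 hγ1 hb m μ C hm hμ hC hC0 hCb
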